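/- arXiv:1308.2768 — 3 statements merged into one kernel-verified Lean document; each statement's English description precedes it below -/
import Mathlib

section
/- Let $X_1,\ldots,X_m$ be independent real random variables, each having a density function bounded by $\alpha>0$. Then for all $\lambda>0$, $\Pr\left(\sum_{i=1}^m X_i^2 \le \lambda m\right) \le (6\alpha)^m \lambda^{m/2}$. -/
/-!
By independence the law of `(X₁, …, Xₘ)` is the product of the marginals, each dominated by
`α • volume`, so the probability is at most `αᵐ` times the volume of the Euclidean ball of radius
`√(λm)`, namely `(πλm)^(m/2) / Γ(m/2 + 1)`. The elementary bound `Γ(x + 1) ≥ (x / e)ˣ` (keep only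
the part `t > x` of Euler's integral) makes this at most `(2πeλ)^(m/2)`, and `2πe < 36`.
-/

open MeasureTheory ProbabilityTheory Real
open scoped ENNReal NNReal

namespace MeasureTheory.Measure

variable {ι : Type*} [Fintype ι] {α : ι → Type*} [∀ i, MeasurableSpace (α i)]

theorem pi_mono {μ ν : ∀ i, Measure (α i)} (h : ∀ i, μ i ≤ ν i) :
    Measure.pi μ ≤ Measure.pi ν := by
  have hle : OuterMeasure.pi (fun i ↦ (μ i).toOuterMeasure) ≤
      OuterMeasure.pi (fun i ↦ (ν i).toOuterMeasure) :=
    OuterMeasure.le_pi.2 fun s _ ↦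
      (OuterMeasure.pi_pi_le _ s).trans (Finset.prod_le_prod' fun i _ ↦ h i (s i))
  refine Measure.le_iff.2 fun s hs ↦ ?_
  rw [Measure.pi_def, Measure.pi_def, toMeasure_apply _ _ hs, toMeasure_apply _ _ hs]
  exact hle s

theorem pi_nnreal_smul (μ : ∀ i, Measure (α i)) [∀ i, SigmaFinite (μ i)] (c : ℝ≥0) :
    Measure.pi (fun i ↦ c • μ i) = c ^ Fintype.card ι • Measure.pi μ := by
  refine Measure.pi_eq fun s _ ↦ ?_
  simp only [Measure.pi_pi, Measure.smul_apply, ENNReal.smul_def, smul_eq_mul,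
    Finset.prod_mul_distrib, Finset.prod_const, Finset.card_univ, ENNReal.coe_pow]

end MeasureTheory.Measure

theorem Real.div_exp_one_rpow_le_Gamma_add_one {x : ℝ} (hx : 0 ≤ x) :
    (x / exp 1) ^ x ≤ Gamma (x + 1) := by
  have hsub : Set.Ioi x ⊆ Set.Ioi 0 := Set.Ioi_subset_Ioi hx
  have hint : IntegrableOn (fun t ↦ exp (-t) * t ^ x) (Set.Ioi 0) := by
    simpa using GammaIntegral_convergent (by linarith : (0 : ℝ) < x + 1)
  calc (x / exp 1) ^ x = ∫ t in Set.Ioi x, exp (-t) * x ^ x := by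
        rw [integral_mul_const, integral_exp_neg_Ioi, div_rpow hx (exp_nonneg _), exp_one_rpow,
          exp_neg, div_eq_inv_mul]
    _ ≤ ∫ t in Set.Ioi x, exp (-t) * t ^ x := by
        have hconst : IntegrableOn (fun t ↦ exp (-t) * x ^ x) (Set.Ioi x) := by
          simpa [IntegrableOn] using (exp_neg_integrableOn_Ioi x one_pos).mul_const (x ^ x)
        refine setIntegral_mono_on hconst (hint.mono_set hsub) measurableSet_Ioi fun t ht ↦ ?_
        gcongr
        exact le_of_lt ht
    _ ≤ ∫ t in Set.Ioi 0, exp (-t) * t ^ x := by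
        refine setIntegral_mono_set hint ?_ hsub.eventuallyLE
        filter_upwards [ae_restrict_mem measurableSet_Ioi] with t ht
        exact mul_nonneg (exp_nonneg _) (rpow_nonneg (le_of_lt ht) _)
    _ = Gamma (x + 1) := by
        rw [Gamma_eq_integral (by linarith)]
        simp

theorem Real.sqrt_pow_eq_rpow {y : ℝ} (hy : 0 ≤ y) (n : ℕ) : √y ^ n = y ^ ((n : ℝ) / 2) := by
  rw [rpow_div_two_eq_sqrt _ hy, rpow_natCast]

theorem Real.sqrt_mul_pow_mul_sqrt_pi_pow_div_Gamma_le (n : ℕ) {lam : ℝ} (hlam : 0 ≤ lam) :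
    √(lam * n) ^ n * (√π ^ n / Gamma (n / 2 + 1)) ≤ 6 ^ n * lam ^ ((n : ℝ) / 2) := by
  set x : ℝ := (n : ℝ) / 2 with hx_def
  have hx : 0 ≤ x := by positivity
  have hsix : (6 : ℝ) ^ n = 36 ^ x := by
    rw [show (6 : ℝ) = √36 by rw [show (36 : ℝ) = 6 ^ 2 by norm_num, sqrt_sq (by norm_num)],
      sqrt_pow_eq_rpow (by norm_num)]
  have hbase : lam * n * π ≤ 36 * lam * (x / exp 1) := by
    have hπe : π * exp 1 ≤ 18 := by nlinarith [pi_lt_d2, exp_one_lt_d9, pi_pos, exp_pos 1]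
    have : lam * n * π = 36 * lam * (x / exp 1) * (π * exp 1 / 18) := by
      rw [hx_def]; field_simp; ring
    rw [this]
    exact mul_le_of_le_one_right (by positivity) (by linarith)
  rw [sqrt_pow_eq_rpow (by positivity), sqrt_pow_eq_rpow pi_pos.le, hsix, mul_div_assoc',
    div_le_iff₀ (Gamma_pos_of_pos (by positivity))]
  calc (lam * n) ^ x * π ^ x = (lam * n * π) ^ x := (mul_rpow (by positivity) pi_pos.le).symm
    _ ≤ (36 * lam * (x / exp 1)) ^ x := by gcongr
    _ = 36 ^ x * lam ^ x * (x / exp 1) ^ x := by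
        rw [mul_rpow (by positivity) (by positivity), mul_rpow (by norm_num) hlam]
    _ ≤ 36 ^ x * lam ^ x * Gamma (x + 1) := by gcongr; exact div_exp_one_rpow_le_Gamma_add_one hx

theorem volume_setOf_sum_sq_le (ι : Type*) [Fintype ι] [Nonempty ι] {R : ℝ} (hR : 0 ≤ R) :
    volume {x : ι → ℝ | ∑ i, x i ^ 2 ≤ R} =
      ENNReal.ofReal
        (√R ^ Fintype.card ι * (√π ^ Fintype.card ι / Gamma (Fintype.card ι / 2 + 1))) := by
  have hball : {x : ι → ℝ | ∑ i, x i ^ 2 ≤ R} =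
      WithLp.toLp 2 ⁻¹' Metric.closedBall (0 : EuclideanSpace ℝ ι) √R := by
    ext x
    simp [EuclideanSpace.norm_eq, sqrt_le_sqrt_iff hR]
  rw [hball, (PiLp.volume_preserving_toLp ι).measure_preimage
      measurableSet_closedBall.nullMeasurableSet, EuclideanSpace.volume_closedBall,
    ENNReal.ofReal_mul (by positivity), ENNReal.ofReal_pow (sqrt_nonneg _)]

theorem volume_setOf_sum_sq_le_mul_card_le (ι : Type*) [Fintype ι] [Nonempty ι] {lam : ℝ}
    (hlam : 0 ≤ lam) :
    volume {x : ι → ℝ | ∑ i, x i ^ 2 ≤ lam * Fintype.card ι} ≤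
      ENNReal.ofReal (6 ^ Fintype.card ι * lam ^ ((Fintype.card ι : ℝ) / 2)) := by
  rw [volume_setOf_sum_sq_le ι (by positivity)]
  exact ENNReal.ofReal_le_ofReal (sqrt_mul_pow_mul_sqrt_pi_pow_div_Gamma_le _ hlam)

/-- If `X 1, …, X m` are independent real random variables, each having a
density (w.r.t. Lebesgue measure) bounded by `α > 0`, then for all `λ > 0`,
`Pr(∑ Xᵢ² ≤ λ m) ≤ (6α)^m · λ^(m/2)`. -/
theorem small_ball_independent_bounded_density
    {Ω : Type*} [MeasurableSpace Ω] (μ : Measure Ω) [IsProbabilityMeasure μ]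
    {m : ℕ} (hm : 0 < m) (X : Fin m → Ω → ℝ) (hmeas : ∀ i, Measurable (X i))
    (hindep : iIndepFun X μ)
    {α : ℝ} (hα : 0 < α) (f : Fin m → ℝ → ENNReal)
    (hf : ∀ i x, f i x ≤ ENNReal.ofReal α)
    (hdens : ∀ i, μ.map (X i) = volume.withDensity (f i))
    {lam : ℝ} (hlam : 0 < lam) :
    μ {ω | ∑ i, (X i ω) ^ 2 ≤ lam * m} ≤
      ENNReal.ofReal ((6 * α) ^ m * lam ^ ((m : ℝ) / 2)) := by
  have : Nonempty (Fin m) := ⟨⟨0, hm⟩⟩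
  set S := {x : Fin m → ℝ | ∑ i, x i ^ 2 ≤ lam * m}
  have hS : MeasurableSet S := measurableSet_le (by fun_prop) measurable_const
  have hmarginal : ∀ i, μ.map (X i) ≤ α.toNNReal • volume := fun i ↦ by
    rw [hdens i, ENNReal.smul_def, ← withDensity_const]
    exact withDensity_mono (ae_of_all _ (hf i))
  calc μ {ω | ∑ i, (X i ω) ^ 2 ≤ lam * m} = μ.map (fun ω i ↦ X i ω) S :=
        (Measure.map_apply (measurable_pi_lambda _ hmeas) hS).symm
    _ = Measure.pi (fun i ↦ μ.map (X i)) S := by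
        rw [hindep.map_fun_eq_pi_map fun i ↦ (hmeas i).aemeasurable]
    _ ≤ Measure.pi (fun _ ↦ α.toNNReal • volume) S := Measure.pi_mono hmarginal S
    _ = ENNReal.ofReal α ^ m * volume S := by
        rw [Measure.pi_nnreal_smul, ← volume_pi]
        simp [ENNReal.smul_def, ENNReal.ofReal]
    _ ≤ ENNReal.ofReal α ^ m * ENNReal.ofReal (6 ^ m * lam ^ ((m : ℝ) / 2)) := by
        gcongr
        simpa using volume_setOf_sum_sq_le_mul_card_le (Fin m) hlam.le
    _ = ENNReal.ofReal ((6 * α) ^ m * lam ^ ((m : ℝ) / 2)) := by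
        rw [← ENNReal.ofReal_pow hα.le, ← ENNReal.ofReal_mul (by positivity)]
        congr 1
        ring
end

section
/- Let $g = (g_1,\ldots,g_n)$ be a standard Gaussian vector and $X = \sqrt{n}\, g/\|g\|_2$. Then $\|\langle X, e_1\rangle\|_{\psi_2} \le 4$, and hence by rotation invariance $X$ satisfies a $\psi_2$ condition with constant $4$: $\|\langle X,a\rangle\|_{\psi_2} \le 4\|a\|_2$ for all $a \in \mathbb{R}^n$. -/
/-!
Write `Y = ⟨a, X⟩ = √n T / √S` with `T = ⟨a, g⟩ ~ N(0, A)`, `A = ‖a‖²`, and `S = ‖g‖²`; it suffices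
to show `E exp (Y² / (16 A)) ≤ 2`. By Cauchy–Schwarz `Y² ≤ n A`, which settles `n ≤ 11` since
`11/16 < log 2`. For `n ≥ 12` split along the event `S ≤ n/2`: off it `Y² ≤ 2 T²`, and
`E exp (T² / (8 A)) = (3/4)^{-1/2}`; on it the integrand is at most `exp (n/16)`, while the event
has probability at most `exp (n/4) 2^{-n/2}` by Chernoff. Then
`(3/4)^{-1/2} + (e^{5/16} / √2)^n ≤ 2`.
-/

open MeasureTheory

/-- The defining set of the `ψ_p` norm: constants `C > 0` with `E exp(|X|^p / C^p) ≤ 2`. -/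
noncomputable def psiSet {Ω : Type*} [MeasurableSpace Ω] (p : ℝ) (X : Ω → ℝ)
    (μ : Measure Ω) : Set ℝ :=
  {C : ℝ | 0 < C ∧ ∫ ω, Real.exp (|X ω| ^ p / C ^ p) ∂μ ≤ 2}

/-- The `ψ_p` (Orlicz) norm `‖X‖_{ψ_p} = inf {C > 0 : E exp(|X|^p / C^p) ≤ 2}`. -/
noncomputable def psiNorm {Ω : Type*} [MeasurableSpace Ω] (p : ℝ) (X : Ω → ℝ)
    (μ : Measure Ω) : ℝ :=
  sInf (psiSet p X μ)

open ProbabilityTheory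

open Real Finset
open scoped NNReal

/-- For `2 c v ≥ 1` both sides are junk `0`: the integrand is not integrable, and `√` of a
nonpositive number is `0`. -/
lemma integral_exp_mul_sq_gaussianReal (c : ℝ) (v : ℝ≥0) :
    ∫ x, exp (c * x ^ 2) ∂gaussianReal 0 v = (√(1 - 2 * c * v))⁻¹ := by
  rcases eq_or_ne v 0 with rfl | hv
  · simp [gaussianReal_zero_var]
  have hpdf : ∀ x, gaussianPDFReal 0 v x • exp (c * x ^ 2)
      = (√(2 * π * v))⁻¹ * exp (-(1 / (2 * v) - c) * x ^ 2) := by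
    intro x
    simp only [gaussianPDFReal, smul_eq_mul, mul_assoc, ← exp_add]
    ring_nf
  have hv' : (0 : ℝ) < v := by positivity
  have hb : 1 - 2 * c * v = 2 * v * (1 / (2 * v) - c) := by field_simp
  rw [integral_gaussianReal_eq_integral_smul hv]
  simp_rw [hpdf]
  rw [integral_const_mul, integral_gaussian, ← Real.sqrt_inv, ← Real.sqrt_inv,
    ← sqrt_mul (by positivity), hb, mul_inv, mul_inv, mul_inv, div_eq_mul_inv]
  field_simp

lemma mul_sq_sum_mul_div_div_le {ι : Type*} [Fintype ι] {r : ℝ} (hr : 0 ≤ r) (a x : ι → ℝ)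
    (hA : 0 < ∑ i, a i ^ 2) :
    r * (∑ i, a i * x i) ^ 2 / (∑ i, x i ^ 2) / (16 * ∑ i, a i ^ 2) ≤ r / 16 := by
  have hCS := sum_mul_sq_le_sq_mul_sq univ a x
  rw [div_le_iff₀ (by positivity)]
  exact div_le_of_le_mul₀ (by positivity) (by positivity) (by nlinarith)

lemma mul_sq_div_div_le_of_half_lt {n T S A : ℝ} (hn : 0 ≤ n) (hA : 0 < A) (hS : n / 2 < S) :
    n * T ^ 2 / S / (16 * A) ≤ 1 / (8 * A) * T ^ 2 := by
  rw [div_le_iff₀ (by positivity), div_le_iff₀ (by linarith)]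
  field_simp
  nlinarith [sq_nonneg T]

lemma inv_sqrt_three_quarters_add_exp_le_two {n : ℕ} (hn : 12 ≤ n) :
    (√(3 / 4))⁻¹ + exp (n / 16) * (exp (n / 4) * (√2)⁻¹ ^ n) ≤ 2 := by
  have hsqrt : (√2)⁻¹ = exp (-(log 2 / 2)) := by
    rw [exp_neg, sqrt_eq_rpow, rpow_def_of_pos two_pos, mul_one_div]
  have htail : exp (n / 16) * (exp (n / 4) * (√2)⁻¹ ^ n) ≤ exp (-(2 / 5)) := by
    rw [hsqrt, ← exp_nat_mul, ← exp_add, ← exp_add, exp_le_exp]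
    have h12 : (12 : ℝ) ≤ n := by exact_mod_cast hn
    nlinarith [log_two_gt_d9]
  have hexp : exp (-(2 / 5)) ≤ 5 / 7 := by
    rw [exp_neg, inv_le_comm₀ (exp_pos _) (by norm_num)]
    linarith [add_one_le_exp (2 / 5 : ℝ)]
  have hsqrt34 : (√(3 / 4))⁻¹ ≤ 9 / 7 := by
    rw [inv_le_comm₀ (by positivity) (by norm_num), le_sqrt (by norm_num) (by norm_num)]
    norm_num
  linarith

section

variable {Ω ι : Type*} [MeasurableSpace Ω] {μ : Measure Ω} [Fintype ι] {g : ι → Ω → ℝ}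

lemma psiNorm_le_of_integral_le {p C : ℝ} {X : Ω → ℝ} (hC : 0 < C)
    (h : ∫ ω, exp (|X ω| ^ p / C ^ p) ∂μ ≤ 2) :
    (psiSet p X μ).Nonempty ∧ psiNorm p X μ ≤ C :=
  ⟨⟨C, hC, h⟩, csInf_le ⟨0, fun _ hx => hx.1.le⟩ ⟨hC, h⟩⟩

lemma integral_exp_mul_sq_of_map_eq_gaussianReal {X : Ω → ℝ} (hX : Measurable X) {v : ℝ≥0}
    (hXv : μ.map X = gaussianReal 0 v) (c : ℝ) :
    ∫ ω, exp (c * X ω ^ 2) ∂μ = (√(1 - 2 * c * v))⁻¹ := by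
  rw [← integral_exp_mul_sq_gaussianReal, ← hXv, integral_map hX.aemeasurable (by fun_prop)]

lemma integrable_exp_mul_sq_of_map_eq_gaussianReal {X : Ω → ℝ} (hX : Measurable X) {v : ℝ≥0}
    (hXv : μ.map X = gaussianReal 0 v) {c : ℝ} (hc : c * v < 1 / 2) :
    Integrable (fun ω => exp (c * X ω ^ 2)) μ :=
  .of_integral_ne_zero <| by
    rw [integral_exp_mul_sq_of_map_eq_gaussianReal hX hXv]
    exact inv_ne_zero (sqrt_pos.2 (by linarith)).ne'

lemma map_sum_mul_eq_gaussianReal (hmeas : ∀ i, Measurable (g i)) (hindep : iIndepFun g μ)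
    (hgauss : ∀ i, μ.map (g i) = gaussianReal 0 1) (a : ι → ℝ) :
    μ.map (fun ω => ∑ i, a i * g i ω) = gaussianReal 0 (∑ i, a i ^ 2).toNNReal := by
  have hlaw : ∀ i, HasLaw (g i) (gaussianReal 0 1) μ := fun i => ⟨(hmeas i).aemeasurable, hgauss i⟩
  have hgl : ∀ i, HasGaussianLaw (fun ω => a i * g i ω) μ :=
    fun i => (hlaw i).hasGaussianLaw.fun_smul (a i)
  have hind : iIndepFun (fun i ω => a i * g i ω) μ :=
    hindep.comp (fun i x => a i * x) fun i => measurable_const_mul _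
  rw [(hind.hasGaussianLaw hgl).fun_sum.map_eq_gaussianReal]
  congr
  · rw [integral_finsetSum _ fun i _ => (hgl i).integrable]
    simp [integral_const_mul, (hlaw _).integral_eq]
  · have hvar := IndepFun.variance_sum (s := univ) (fun i _ => (hgl i).memLp_two)
      fun i _ j _ hij => hind.indepFun hij
    rw [Finset.sum_fn] at hvar
    simp [hvar, variance_const_mul, (hlaw _).variance_eq]

variable [IsProbabilityMeasure μ]

lemma psiSet_zero {p : ℝ} (hp : p ≠ 0) : psiSet p (fun _ => 0) μ = Set.Ioi 0 := by
  ext C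
  simp [psiSet, zero_rpow hp]

/-- Chernoff bound for the lower tail of a chi-squared variable. -/
lemma measureReal_sum_sq_le_le (hmeas : ∀ i, Measurable (g i)) (hindep : iIndepFun g μ)
    (hgauss : ∀ i, μ.map (g i) = gaussianReal 0 1) {t : ℝ} (ht : 0 ≤ t) (r : ℝ) :
    μ.real {ω | ∑ i, g i ω ^ 2 ≤ r} ≤ exp (t * r) * (√(1 + 2 * t))⁻¹ ^ Fintype.card ι := by
  have hsq : iIndepFun (fun i ω => g i ω ^ 2) μ :=
    hindep.comp (fun _ x => x ^ 2) fun _ => by fun_prop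
  have hmgf : ∀ i, mgf (fun ω => g i ω ^ 2) μ (-t) = (√(1 + 2 * t))⁻¹ := fun i => by
    rw [mgf, integral_exp_mul_sq_of_map_eq_gaussianReal (hmeas i) (hgauss i)]
    simp only [NNReal.coe_one]
    ring_nf
  have hint : ∀ i, Integrable (fun ω => exp (-t * g i ω ^ 2)) μ := fun i =>
    integrable_exp_mul_sq_of_map_eq_gaussianReal (hmeas i) (hgauss i)
      (by simp only [NNReal.coe_one, mul_one]; linarith)
  have hchernoff := measure_le_le_exp_mul_mgf r (neg_nonpos.2 ht)
    (hsq.integrable_exp_mul_sum (fun i => by fun_prop) (s := univ) fun i _ => hint i)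
  rw [hsq.mgf_sum (fun i => by fun_prop)] at hchernoff
  simpa [Finset.sum_apply, hmgf] using hchernoff

lemma integral_exp_sq_div_le_two_of_twelve_le (hmeas : ∀ i, Measurable (g i))
    (hindep : iIndepFun g μ) (hgauss : ∀ i, μ.map (g i) = gaussianReal 0 1) {a : ι → ℝ}
    (hA : 0 < ∑ i, a i ^ 2) (hn : 12 ≤ Fintype.card ι) :
    ∫ ω, exp (Fintype.card ι * (∑ i, a i * g i ω) ^ 2 / (∑ i, g i ω ^ 2) / (16 * ∑ i, a i ^ 2))
      ∂μ ≤ 2 := by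
  set n := Fintype.card ι
  set A := ∑ i, a i ^ 2
  have hT : Measurable fun ω => ∑ i, a i * g i ω := by fun_prop
  set E := {ω | ∑ i, g i ω ^ 2 ≤ n / 2}
  have hE : MeasurableSet E := measurableSet_le (by fun_prop) measurable_const
  have hlaw := map_sum_mul_eq_gaussianReal hmeas hindep hgauss a
  have hA' : (A.toNNReal : ℝ) = A := Real.coe_toNNReal _ hA.le
  have hint : Integrable (fun ω => exp (1 / (8 * A) * (∑ i, a i * g i ω) ^ 2)) μ :=
    integrable_exp_mul_sq_of_map_eq_gaussianReal hT hlaw (by rw [hA']; field_simp; norm_num)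
  have hsplit : ∀ ω, exp (n * (∑ i, a i * g i ω) ^ 2 / (∑ i, g i ω ^ 2) / (16 * A))
      ≤ exp (1 / (8 * A) * (∑ i, a i * g i ω) ^ 2) + E.indicator (fun _ => exp (n / 16)) ω := by
    intro ω
    by_cases hω : ω ∈ E
    · rw [Set.indicator_of_mem hω]
      exact le_add_of_nonneg_of_le (exp_pos _).le
        (exp_le_exp.2 (mul_sq_sum_mul_div_div_le n.cast_nonneg a (g · ω) hA))
    · rw [Set.indicator_of_notMem hω, add_zero, exp_le_exp]
      exact mul_sq_div_div_le_of_half_lt n.cast_nonneg hA (lt_of_not_ge hω)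
  have hch := measureReal_sum_sq_le_le hmeas hindep hgauss (t := 1 / 2) (by norm_num) (n / 2)
  rw [show (1 : ℝ) + 2 * (1 / 2) = 2 by norm_num, show 1 / 2 * ((n : ℝ) / 2) = n / 4 by ring]
    at hch
  calc _ ≤ ∫ ω, (exp (1 / (8 * A) * (∑ i, a i * g i ω) ^ 2)
          + E.indicator (fun _ => exp (n / 16)) ω) ∂μ :=
        integral_mono_of_nonneg (ae_of_all _ fun _ => (exp_pos _).le)
          (hint.add ((integrable_const _).indicator hE)) (ae_of_all _ hsplit)
    _ = (√(3 / 4))⁻¹ + exp (n / 16) * μ.real E := by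
        rw [integral_add hint ((integrable_const _).indicator hE), integral_indicator_const _ hE,
          integral_exp_mul_sq_of_map_eq_gaussianReal hT hlaw, hA', smul_eq_mul,
          mul_comm (μ.real E)]
        congr 3
        field_simp
        norm_num
    _ ≤ (√(3 / 4))⁻¹ + exp (n / 16) * (exp (n / 4) * (√2)⁻¹ ^ n) := by gcongr
    _ ≤ 2 := inv_sqrt_three_quarters_add_exp_le_two hn

lemma integral_exp_sq_div_le_two (hmeas : ∀ i, Measurable (g i)) (hindep : iIndepFun g μ)
    (hgauss : ∀ i, μ.map (g i) = gaussianReal 0 1) {a : ι → ℝ} (hA : 0 < ∑ i, a i ^ 2) :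
    ∫ ω, exp (Fintype.card ι * (∑ i, a i * g i ω) ^ 2 / (∑ i, g i ω ^ 2) / (16 * ∑ i, a i ^ 2))
      ∂μ ≤ 2 := by
  by_cases hn : 12 ≤ Fintype.card ι
  · exact integral_exp_sq_div_le_two_of_twelve_le hmeas hindep hgauss hA hn
  have hle_two : ∀ ω, exp (Fintype.card ι * (∑ i, a i * g i ω) ^ 2 / (∑ i, g i ω ^ 2)
      / (16 * ∑ i, a i ^ 2)) ≤ 2 := by
    intro ω
    rw [← exp_log two_pos, exp_le_exp]
    have : (Fintype.card ι : ℝ) ≤ 11 := by exact_mod_cast (by omega : Fintype.card ι ≤ 11)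
    linarith [mul_sq_sum_mul_div_div_le (Fintype.card ι).cast_nonneg a (g · ω) hA,
      log_two_gt_d9]
  calc _ ≤ ∫ _, (2 : ℝ) ∂μ := integral_mono_of_nonneg (ae_of_all _ fun _ => (exp_pos _).le)
        (integrable_const 2) (ae_of_all _ hle_two)
    _ = 2 := by simp

lemma psiNorm_sum_mul_normalized_le (hmeas : ∀ i, Measurable (g i)) (hindep : iIndepFun g μ)
    (hgauss : ∀ i, μ.map (g i) = gaussianReal 0 1) (a : ι → ℝ) :
    (psiSet 2 (fun ω => ∑ i, a i * (√(Fintype.card ι) * g i ω / √(∑ j, g j ω ^ 2))) μ).Nonempty ∧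
      psiNorm 2 (fun ω => ∑ i, a i * (√(Fintype.card ι) * g i ω / √(∑ j, g j ω ^ 2))) μ ≤
        4 * √(∑ i, a i ^ 2) := by
  have hA0 : 0 ≤ ∑ i, a i ^ 2 := sum_nonneg fun i _ => sq_nonneg (a i)
  rcases hA0.eq_or_lt with hA | hA
  · obtain rfl : a = 0 := funext fun i => by
      simpa using (sum_eq_zero_iff_of_nonneg fun i _ => sq_nonneg (a i)).1 hA.symm i (mem_univ i)
    simp [psiNorm, psiSet_zero two_ne_zero]
  refine psiNorm_le_of_integral_le (by positivity) ?_
  convert integral_exp_sq_div_le_two hmeas hindep hgauss hA using 3 with ω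
  have hY : ∑ i, a i * (√(Fintype.card ι) * g i ω / √(∑ j, g j ω ^ 2))
      = √(Fintype.card ι) * (∑ i, a i * g i ω) / √(∑ j, g j ω ^ 2) := by
    rw [mul_sum, sum_div]
    exact sum_congr rfl fun i _ => by ring
  rw [hY, rpow_two, rpow_two, sq_abs, div_pow, mul_pow, mul_pow, sq_sqrt (by positivity),
    sq_sqrt (by positivity), sq_sqrt hA0]
  norm_num

end

/-- Let `g = (g₁,…,gₙ)` be a standard Gaussian vector and `X = √n · g / ‖g‖₂`.
Then `‖⟨X, e₁⟩‖_{ψ₂} ≤ 4`, and by rotation invariance `X` satisfies a `ψ₂` condition with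
constant `4`: `‖⟨X, a⟩‖_{ψ₂} ≤ 4‖a‖₂` for all `a ∈ ℝⁿ`. -/
theorem sphere_vector_psi2
    {Ω : Type*} [MeasurableSpace Ω] (μ : Measure Ω) [IsProbabilityMeasure μ]
    {n : ℕ} (hn : 0 < n) (g : Fin n → Ω → ℝ) (hmeas : ∀ i, Measurable (g i))
    (hindep : iIndepFun g μ)
    (hgauss : ∀ i, μ.map (g i) = gaussianReal 0 1) :
    ((psiSet 2 (fun ω => Real.sqrt n * g ⟨0, hn⟩ ω / Real.sqrt (∑ j, (g j ω) ^ 2)) μ).Nonempty ∧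
      psiNorm 2 (fun ω => Real.sqrt n * g ⟨0, hn⟩ ω / Real.sqrt (∑ j, (g j ω) ^ 2)) μ ≤ 4) ∧
    (∀ a : Fin n → ℝ,
      (psiSet 2 (fun ω => ∑ i, a i *
        (Real.sqrt n * g i ω / Real.sqrt (∑ j, (g j ω) ^ 2))) μ).Nonempty ∧
      psiNorm 2 (fun ω => ∑ i, a i *
        (Real.sqrt n * g i ω / Real.sqrt (∑ j, (g j ω) ^ 2))) μ ≤
          4 * Real.sqrt (∑ i, (a i) ^ 2)) := by
  have key (a : Fin n → ℝ) :=
    Fintype.card_fin n ▸ psiNorm_sum_mul_normalized_le hmeas hindep hgauss a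
  refine ⟨?_, key⟩
  simpa [Pi.single_apply] using key (Pi.single ⟨0, hn⟩ 1)
end

section
/- Let $\Gamma$ be an $m\times n$ random matrix whose rows $\Gamma_1,\ldots,\Gamma_m$ are independent random vectors, each having a concentration property with constant $\alpha$: $\sup_L \Pr(|\langle\Gamma_i, x\rangle - L| < \varepsilon) \le \alpha\varepsilon$ for every $\varepsilon \ge 0$ and every unit vector $x$. Then for every unit vector $x \in S^{n-1}$ and every $\lambda > 0$, $\Pr(\|\Gamma x\|_2^2 < \lambda m) \le (6\alpha)^m \lambda^{m/2}$. -/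
/-!
Chernoff's method applied to the lower tail: for `t > 0`,
`P(∑ Yᵢ² < λm) ≤ e^{tλm} ∏ᵢ E e^{-tYᵢ²}` by independence of the `Yᵢ = ⟨Γᵢ, x⟩`.
Each factor is controlled by the small-ball bound alone: layering
`e^{-tY²} ≤ ∑ₖ e^{-k} 1{|Y| < √((k+1)/t)}` gives `E e^{-tY²} ≤ α/√t · ∑ₖ (k+1) e^{-k}`,
and `t = 1/(2λ)` turns the product into `(√(2e) (1 - e⁻¹)⁻² α √λ)^m ≤ (6α √λ)^m`.
-/

open MeasureTheory ProbabilityTheory Real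

lemma hasSum_succ_mul_geometric {𝕜 : Type*} [NormedDivisionRing 𝕜] [HasSummableGeomSeries 𝕜]
    {r : 𝕜} (hr : ‖r‖ < 1) :
    HasSum (fun n : ℕ ↦ ((n : 𝕜) + 1) * r ^ n) (1 / (1 - r) ^ 2) := by
  simpa using hasSum_choose_mul_geometric_of_norm_lt_one 1 hr

lemma ofReal_exp_neg_mul_sq_le_tsum {t : ℝ} (ht : 0 < t) (y : ℝ) :
    ENNReal.ofReal (exp (-(t * y ^ 2))) ≤
      ∑' k : ℕ, if |y| < √((k + 1) / t) then ENNReal.ofReal (exp (-1) ^ k) else 0 := by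
  set k := ⌊t * y ^ 2⌋₊
  have hk : |y| < √((k + 1) / t) := by
    rw [← sqrt_sq_eq_abs]
    refine sqrt_lt_sqrt (sq_nonneg y) ?_
    rw [lt_div_iff₀ ht, mul_comm]
    exact Nat.lt_floor_add_one _
  refine le_trans ?_ (ENNReal.le_tsum k)
  rw [if_pos hk, ← exp_nat_mul, mul_neg_one]
  exact ENNReal.ofReal_le_ofReal (exp_le_exp.mpr (neg_le_neg (Nat.floor_le (by positivity))))

lemma lintegral_exp_neg_mul_sq_le {Ω : Type*} [MeasurableSpace Ω] {μ : Measure Ω} {Y : Ω → ℝ}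
    (hY : Measurable Y) {α t : ℝ} (hα : 0 ≤ α) (ht : 0 < t)
    (hconc : ∀ ε, 0 ≤ ε → μ {ω | |Y ω| < ε} ≤ ENNReal.ofReal (α * ε)) :
    ∫⁻ ω, ENNReal.ofReal (exp (-(t * Y ω ^ 2))) ∂μ ≤
      ENNReal.ofReal (α / √t * (1 / (1 - exp (-1)) ^ 2)) := by
  set r := exp (-1)
  have hr : ‖r‖ < 1 := by
    rw [norm_of_nonneg (exp_nonneg _), exp_lt_one_iff]; norm_num
  have hS := hasSum_succ_mul_geometric hr
  set A : ℕ → Set Ω := fun k ↦ {ω | |Y ω| < √((k + 1) / t)}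
  have hA : ∀ k, MeasurableSet (A k) := fun k ↦ measurableSet_lt hY.abs measurable_const
  have hAμ : ∀ k : ℕ, μ (A k) ≤ ENNReal.ofReal (α * ((k + 1) / √t)) := fun k ↦ by
    refine (hconc _ (sqrt_nonneg _)).trans (ENNReal.ofReal_le_ofReal ?_)
    rw [sqrt_div' _ ht.le]
    gcongr
    exact sqrt_le_self_iff.mpr (Or.inr (by simp))
  calc ∫⁻ ω, ENNReal.ofReal (exp (-(t * Y ω ^ 2))) ∂μ
      ≤ ∫⁻ ω, ∑' k, (A k).indicator (fun _ ↦ ENNReal.ofReal (r ^ k)) ω ∂μ :=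
        lintegral_mono fun ω ↦ ofReal_exp_neg_mul_sq_le_tsum ht (Y ω)
    _ = ∑' k, ENNReal.ofReal (r ^ k) * μ (A k) := by
        rw [lintegral_tsum fun k ↦ (measurable_const.indicator (hA k)).aemeasurable]
        simp only [lintegral_indicator_const (hA _)]
    _ ≤ ∑' k : ℕ, ENNReal.ofReal (α / √t * ((k + 1) * r ^ k)) := by
        refine ENNReal.tsum_le_tsum fun k ↦ ?_
        grw [hAμ k, ← ENNReal.ofReal_mul (by positivity)]
        exact (congrArg _ (by ring)).le
    _ = ENNReal.ofReal (α / √t * (1 / (1 - r) ^ 2)) := by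
        rw [← ENNReal.ofReal_tsum_of_nonneg (fun k ↦ by positivity) (hS.summable.mul_left _),
          (hS.mul_left _).tsum_eq]

lemma measure_lt_le_ofReal_exp_mul_lintegral {Ω : Type*} [MeasurableSpace Ω] {μ : Measure Ω}
    {f : Ω → ℝ} (hf : AEMeasurable f μ) {t : ℝ} (ht : 0 ≤ t) (c : ℝ) :
    μ {ω | f ω < c} ≤
      ENNReal.ofReal (exp (t * c)) * ∫⁻ ω, ENNReal.ofReal (exp (-(t * f ω))) ∂μ := by
  rw [← lintegral_const_mul' _ _ ENNReal.ofReal_ne_top]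
  calc μ {ω | f ω < c}
      ≤ μ {ω | 1 ≤ ENNReal.ofReal (exp (t * c)) * ENNReal.ofReal (exp (-(t * f ω)))} := by
        refine measure_mono fun ω (hω : f ω < c) ↦ ?_
        rw [Set.mem_ofPred_eq, ← ENNReal.ofReal_mul (exp_nonneg _), ← exp_add,
          ENNReal.one_le_ofReal]
        exact one_le_exp (by nlinarith)
    _ = 1 * μ {ω | 1 ≤ ENNReal.ofReal (exp (t * c)) * ENNReal.ofReal (exp (-(t * f ω)))} :=
        (one_mul _).symm
    _ ≤ _ := mul_meas_ge_le_lintegral₀ (by fun_prop) 1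

lemma lintegral_ofReal_exp_sum {Ω ι : Type*} [MeasurableSpace Ω] {μ : Measure Ω}
    {X : ι → Ω → ℝ} (hX : iIndepFun X μ) (hmeas : ∀ i, Measurable (X i)) (s : Finset ι) :
    ∫⁻ ω, ENNReal.ofReal (exp (∑ i ∈ s, X i ω)) ∂μ =
      ∏ i ∈ s, ∫⁻ ω, ENNReal.ofReal (exp (X i ω)) ∂μ := by
  simp_rw [exp_sum, ENNReal.ofReal_prod_of_nonneg fun i _ ↦ exp_nonneg _]
  exact lintegral_prod_eq_prod_lintegral_of_indepFun s _
    (hX.comp (fun _ x ↦ ENNReal.ofReal (exp x)) fun _ ↦ by fun_prop) fun i ↦ by fun_prop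

lemma exp_half_mul_sqrt_two_mul_le_six : exp (1 / 2) * √2 * (1 / (1 - exp (-1)) ^ 2) ≤ 6 := by
  have he := exp_one_gt_d9
  have h₁ : exp (1 / 2) * √2 ≤ 2.332 := by
    rw [← sqrt_mul_self (exp_nonneg _), ← sqrt_mul (by positivity), ← exp_add, sqrt_le_left]
    · norm_num; linarith [exp_one_lt_d9]
    · norm_num
  have hpos : 0 < 1 - exp (-1) := by rw [sub_pos, exp_lt_one_iff]; norm_num
  have h₂ : 1 / (1 - exp (-1)) ≤ 1.5821 := by
    rw [div_le_iff₀ hpos, exp_neg, mul_sub, mul_one, le_sub_comm]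
    calc 1.5821 * (exp 1)⁻¹ ≤ 1.5821 * 2.7182818283⁻¹ := by gcongr
      _ ≤ 1.5821 - 1 := by norm_num
  calc exp (1 / 2) * √2 * (1 / (1 - exp (-1)) ^ 2) ≤ 2.332 * 1.5821 ^ 2 := by
        rw [← one_div_pow]
        gcongr
    _ ≤ 6 := by norm_num

lemma exp_mul_pow_le_six_mul_pow {α lam : ℝ} (hα : 0 ≤ α) (hlam : 0 < lam) (m : ℕ) :
    exp ((2 * lam)⁻¹ * (lam * m)) * (α / √(2 * lam)⁻¹ * (1 / (1 - exp (-1)) ^ 2)) ^ m ≤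
      (6 * α) ^ m * lam ^ ((m : ℝ) / 2) := by
  have hexp : exp ((2 * lam)⁻¹ * (lam * m)) = exp (1 / 2) ^ m := by
    rw [← exp_nat_mul]; field_simp
  have hsqrt : α / √(2 * lam)⁻¹ = α * √2 * √lam := by
    rw [sqrt_inv, div_inv_eq_mul, sqrt_mul zero_le_two, mul_assoc]
  have hrpow : lam ^ ((m : ℝ) / 2) = √lam ^ m := by
    rw [sqrt_eq_rpow, ← rpow_natCast, ← rpow_mul hlam.le]
    ring_nf
  rw [hexp, hsqrt, hrpow, ← mul_pow, ← mul_pow]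
  refine pow_le_pow_left₀ (by positivity) ?_ m
  calc exp (1 / 2) * (α * √2 * √lam * (1 / (1 - exp (-1)) ^ 2))
      = exp (1 / 2) * √2 * (1 / (1 - exp (-1)) ^ 2) * (α * √lam) := by ring
    _ ≤ 6 * (α * √lam) := by gcongr; exact exp_half_mul_sqrt_two_mul_le_six
    _ = 6 * α * √lam := by ring

theorem small_ball_matrix_concentration_rows_general
    {Ω : Type*} [MeasurableSpace Ω] (μ : Measure Ω)
    {m n : ℕ} (Γ : Fin m → Ω → (Fin n → ℝ)) (hmeas : ∀ i, Measurable (Γ i))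
    (hindep : iIndepFun Γ μ)
    {α : ℝ} (hα : 0 < α)
    (hconc : ∀ i, ∀ x : Fin n → ℝ, ∑ j, (x j) ^ 2 = 1 → ∀ ε : ℝ, 0 ≤ ε → ∀ L : ℝ,
      μ {ω | |(∑ j, Γ i ω j * x j) - L| < ε} ≤ ENNReal.ofReal (α * ε)) :
    ∀ x : Fin n → ℝ, ∑ j, (x j) ^ 2 = 1 → ∀ lam : ℝ, 0 < lam →
      μ {ω | ∑ i, (∑ j, Γ i ω j * x j) ^ 2 < lam * m} ≤
        ENNReal.ofReal ((6 * α) ^ m * lam ^ ((m : ℝ) / 2)) := by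
  intro x hx lam hlam
  set Y : Fin m → Ω → ℝ := fun i ω ↦ ∑ j, Γ i ω j * x j
  have hY : ∀ i, Measurable (Y i) := fun i ↦ by fun_prop
  have hYindep : iIndepFun Y μ := hindep.comp (fun _ v ↦ ∑ j, v j * x j) fun _ ↦ by fun_prop
  set t := (2 * lam)⁻¹
  set B := α / √t * (1 / (1 - exp (-1)) ^ 2)
  have hrow : ∀ i, ∫⁻ ω, ENNReal.ofReal (exp (-(t * Y i ω ^ 2))) ∂μ ≤ ENNReal.ofReal B :=
    fun i ↦ lintegral_exp_neg_mul_sq_le (hY i) hα.le (by positivity) fun ε hε ↦ by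
      simpa using hconc i x hx ε hε 0
  calc μ {ω | ∑ i, Y i ω ^ 2 < lam * m}
      ≤ ENNReal.ofReal (exp (t * (lam * m))) *
          ∫⁻ ω, ENNReal.ofReal (exp (∑ i, -(t * Y i ω ^ 2))) ∂μ := by
        simpa only [Finset.mul_sum, Finset.sum_neg_distrib] using
          measure_lt_le_ofReal_exp_mul_lintegral (f := fun ω ↦ ∑ i, Y i ω ^ 2) (by fun_prop)
            (by positivity) (lam * m)
    _ = ENNReal.ofReal (exp (t * (lam * m))) *
          ∏ i, ∫⁻ ω, ENNReal.ofReal (exp (-(t * Y i ω ^ 2))) ∂μ := by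
        congr 1
        exact lintegral_ofReal_exp_sum (hYindep.comp (fun _ y ↦ -(t * y ^ 2)) fun _ ↦ by fun_prop)
          (fun i ↦ by fun_prop) _
    _ ≤ ENNReal.ofReal (exp (t * (lam * m))) * ∏ _i : Fin m, ENNReal.ofReal B := by
        gcongr with i; exact hrow i
    _ ≤ ENNReal.ofReal ((6 * α) ^ m * lam ^ ((m : ℝ) / 2)) := by
        rw [Finset.prod_const, Finset.card_fin, ← ENNReal.ofReal_pow (by positivity),
          ← ENNReal.ofReal_mul (exp_nonneg _)]
        exact ENNReal.ofReal_le_ofReal (exp_mul_pow_le_six_mul_pow hα.le hlam m)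

/-- If `Γ` is an `m × n` random matrix whose rows `Γ₁,…,Γ_m` are independent
random vectors, each having a concentration property with constant `α`
(`sup_L Pr(|⟨Γᵢ,x⟩ - L| < ε) ≤ αε` for all `ε ≥ 0` and unit vectors `x`), then for every unit
vector `x` and `λ > 0`, `Pr(‖Γx‖₂² < λm) ≤ (6α)^m λ^(m/2)`. -/
theorem small_ball_matrix_concentration_rows
    {Ω : Type*} [MeasurableSpace Ω] (μ : Measure Ω) [IsProbabilityMeasure μ]
    {m n : ℕ} (hm : 0 < m) (Γ : Fin m → Ω → (Fin n → ℝ)) (hmeas : ∀ i, Measurable (Γ i))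
    (hindep : iIndepFun Γ μ)
    {α : ℝ} (hα : 0 < α)
    (hconc : ∀ i, ∀ x : Fin n → ℝ, ∑ j, (x j) ^ 2 = 1 → ∀ ε : ℝ, 0 ≤ ε → ∀ L : ℝ,
      μ {ω | |(∑ j, Γ i ω j * x j) - L| < ε} ≤ ENNReal.ofReal (α * ε)) :
    ∀ x : Fin n → ℝ, ∑ j, (x j) ^ 2 = 1 → ∀ lam : ℝ, 0 < lam →
      μ {ω | ∑ i, (∑ j, Γ i ω j * x j) ^ 2 < lam * m} ≤
        ENNReal.ofReal ((6 * α) ^ m * lam ^ ((m : ℝ) / 2)) :=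
  small_ball_matrix_concentration_rows_general μ Γ hmeas hindep hα hconc
end
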